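/- Let $a \geq 1$, $b \geq 1$, $c_1 > 0$, and let $(M_k)_{k \geq 0}$ be a sequence of reals with $M_k \geq 1$, $M_0 \leq c_3$ for some $c_3 \geq 1$, and $M_k \leq b^k M_{k-1}^{2 + \frac{2}{c_1} \cdot 2^{-k}} + a^{2^k}$ for all $k \geq 1$. Then $\liminf_{k \to \infty} M_k^{2^{-k}} \leq (2\sqrt{2}\, b^3 a^{1 + 1/c_1} c_3)^{e^{1/c_1}}$. -/

import Mathlib

open Real Filter

lemma aux_sum_geo (k : ℕ) : ∑ j ∈ Finset.range k, ((2:ℝ)^(j+1))⁻¹ = 1 - ((2:ℝ)^k)⁻¹ := by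
  induction k with
  | zero => simp
  | succ k ih =>
    rw [Finset.sum_range_succ, ih]
    have h : (2:ℝ)^k ≠ 0 := by positivity
    field_simp
    ring

lemma aux_sum_jgeo (k : ℕ) : ∑ j ∈ Finset.range k, ((j:ℝ)+1)/(2:ℝ)^(j+1) = 2 - ((k:ℝ)+2)/(2:ℝ)^k := by
  induction k with
  | zero => simp
  | succ k ih =>
    rw [Finset.sum_range_succ, ih]
    have h : (2:ℝ)^k ≠ 0 := by positivity
    push_cast
    field_simp
    ring

theorem stmt_5 (a b c₁ c₃ : ℝ) (ha : 1 ≤ a) (hb : 1 ≤ b) (hc1 : 0 < c₁) (hc3 : 1 ≤ c₃)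
    (M : ℕ → ℝ) (hM1 : ∀ k, 1 ≤ M k) (hM0 : M 0 ≤ c₃)
    (hrec : ∀ k : ℕ, 1 ≤ k →
      M k ≤ b ^ k * M (k - 1) ^ (2 + (2 / c₁) * (2 : ℝ) ^ (-(k : ℝ))) + a ^ (2 ^ k)) :
    Filter.liminf (fun k : ℕ => M k ^ ((2 : ℝ) ^ (-(k : ℝ)))) atTop ≤
      (2 * Real.sqrt 2 * b ^ 3 * a ^ (1 + 1 / c₁) * c₃) ^ Real.exp (1 / c₁) := by
  set C : ℝ := 2 * Real.sqrt 2 * b ^ 3 * a ^ (1 + 1 / c₁) * c₃ with hC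
  set E : ℝ := Real.exp (1 / c₁) with hE
  set T : ℝ := Real.log (c₃ * a) with hT
  set N : ℕ → ℝ := fun k => max (M k) (a ^ (2^k)) with hN
  set P : ℕ → ℝ := fun k => ∏ j ∈ Finset.range k, (1 + ((2:ℝ)^(j+1) * c₁)⁻¹) with hP
  set S : ℕ → ℝ := fun k => ∑ j ∈ Finset.range k,
      (Real.log 2 + ((j:ℝ)+1) * Real.log b) / (2:ℝ)^(j+1) with hS
  have ha0 : (0:ℝ) < a := lt_of_lt_of_le one_pos ha
  have hb0 : (0:ℝ) < b := lt_of_lt_of_le one_pos hb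
  have hlogb : 0 ≤ Real.log b := Real.log_nonneg hb
  have hloga : 0 ≤ Real.log a := Real.log_nonneg ha
  have hlog2 : 0 ≤ Real.log 2 := Real.log_nonneg one_le_two
  have hN1 : ∀ k, 1 ≤ N k := fun k => le_trans (hM1 k) (le_max_left _ _)
  have hN0 : ∀ k, 0 < N k := fun k => lt_of_lt_of_le one_pos (hN1 k)
  have hT0 : 0 ≤ T := by
    rw [hT]
    exact Real.log_nonneg (le_trans ha (le_mul_of_one_le_left (le_of_lt ha0) hc3))
  have hP1 : ∀ k, 1 ≤ P k := by
    intro k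
    simp only [hP]
    calc (1:ℝ) = ∏ _j ∈ Finset.range k, (1:ℝ) := by simp
      _ ≤ ∏ j ∈ Finset.range k, (1 + ((2:ℝ)^(j+1) * c₁)⁻¹) := by
          apply Finset.prod_le_prod
          · intro j _; norm_num
          · intro j _
            have : (0:ℝ) ≤ ((2:ℝ)^(j+1) * c₁)⁻¹ := by positivity
            linarith
  have hS0 : ∀ k, 0 ≤ S k := by
    intro k
    simp only [hS]
    apply Finset.sum_nonneg
    intro j _
    positivity
  -- the key inductive bound
  have key : ∀ k, Real.log (N k) ≤ 2^k * P k * (T + S k) := by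
    intro k
    induction k with
    | zero =>
      have h1 : N 0 ≤ c₃ * a := by
        simp only [hN, pow_zero, pow_one]
        apply max_le
        · exact le_trans hM0 (le_mul_of_one_le_right (le_trans zero_le_one hc3) ha)
        · exact le_mul_of_one_le_left (le_of_lt ha0) hc3
      have h2 := Real.log_le_log (hN0 0) h1
      simp only [hP, hS, hT, Finset.range_zero, Finset.prod_empty, Finset.sum_empty,
        pow_zero, add_zero, one_mul, mul_one]
      exact h2
    | succ k ih =>
      set α : ℝ := 2 + (2 / c₁) * (2:ℝ) ^ (-((k:ℝ)+1)) with hαdef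
      have hcast : -(((k+1 : ℕ)) : ℝ) = -((k:ℝ)+1) := by push_cast; ring
      have hrpow : (2:ℝ) ^ (-((k:ℝ)+1)) = ((2:ℝ)^(k+1))⁻¹ := by
        rw [← Real.rpow_natCast 2 (k+1), ← Real.rpow_neg (by norm_num : (0:ℝ) ≤ 2)]
        congr 1
        push_cast
        ring
      have hα2 : 2 ≤ α := by
        rw [hαdef]
        have : (0:ℝ) ≤ (2 / c₁) * (2:ℝ) ^ (-((k:ℝ)+1)) := by positivity
        linarith
      have hα0 : (0:ℝ) ≤ α := by linarith
      have hαeq : α = 2 * (1 + ((2:ℝ)^(k+1) * c₁)⁻¹) := by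
        rw [hαdef, hrpow]
        have h1 : (2:ℝ)^(k+1) ≠ 0 := by positivity
        field_simp
      have hrec1 : M (k+1) ≤ b ^ (k+1) * M k ^ α + a ^ (2 ^ (k+1)) := by
        rw [hαdef]
        have h := hrec (k+1) (Nat.le_add_left 1 k)
        simp only [Nat.add_sub_cancel] at h
        rw [hcast] at h
        exact h
      have hMN : M k ^ α ≤ N k ^ α :=
        Real.rpow_le_rpow (le_trans zero_le_one (hM1 k)) (le_max_left _ _) hα0
      have haN : a ^ (2^(k+1)) ≤ N k ^ α := by
        have h1 : a ^ (2^(k+1)) = (a ^ (2^k)) ^ (2:ℕ) := by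
          rw [pow_succ, pow_mul]
        have h2 : (a ^ (2^k)) ^ (2:ℕ) ≤ (N k) ^ (2:ℕ) :=
          pow_le_pow_left₀ (by positivity) (le_max_right _ _) 2
        have h3 : (N k) ^ (2:ℕ) = (N k) ^ ((2:ℕ):ℝ) := (Real.rpow_natCast _ 2).symm
        have h4 : (N k) ^ ((2:ℕ):ℝ) ≤ N k ^ α := by
          apply Real.rpow_le_rpow_of_exponent_le (hN1 k)
          push_cast
          exact hα2
        calc a ^ (2^(k+1)) = (a ^ (2^k)) ^ (2:ℕ) := h1
          _ ≤ (N k) ^ (2:ℕ) := h2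
          _ = (N k) ^ ((2:ℕ):ℝ) := h3
          _ ≤ N k ^ α := h4
      have hbk1 : (1:ℝ) ≤ b ^ (k+1) := one_le_pow₀ hb
      have hNα0 : 0 < N k ^ α := Real.rpow_pos_of_pos (hN0 k) α
      have hNrec : N (k+1) ≤ 2 * (b^(k+1) * N k ^ α) := by
        apply max_le
        · calc M (k+1) ≤ b ^ (k+1) * M k ^ α + a ^ (2 ^ (k+1)) := hrec1
            _ ≤ b ^ (k+1) * N k ^ α + b ^ (k+1) * N k ^ α :=
                add_le_add (mul_le_mul_of_nonneg_left hMN (by positivity))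
                  (le_trans haN (le_mul_of_one_le_left (le_of_lt hNα0) hbk1))
            _ = 2 * (b^(k+1) * N k ^ α) := by ring
        · calc a ^ (2^(k+1)) ≤ N k ^ α := haN
            _ ≤ 2 * (b^(k+1) * N k ^ α) := by nlinarith
      have hlogstep : Real.log (N (k+1)) ≤ Real.log 2 + ((k:ℝ)+1) * Real.log b + α * Real.log (N k) := by
        have h1 := Real.log_le_log (hN0 (k+1)) hNrec
        have h2 : Real.log (2 * (b^(k+1) * N k ^ α))
            = Real.log 2 + ((k+1 : ℕ):ℝ) * Real.log b + α * Real.log (N k) := by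
          rw [Real.log_mul (by norm_num) (by positivity),
            Real.log_mul (by positivity) (by positivity),
            Real.log_pow, Real.log_rpow (hN0 k)]
          push_cast; ring
        rw [h2] at h1
        push_cast at h1
        linarith
      have hlogN0 : 0 ≤ Real.log (N k) := Real.log_nonneg (hN1 k)
      have h5 : α * Real.log (N k) ≤ α * (2^k * P k * (T + S k)) :=
        mul_le_mul_of_nonneg_left ih hα0
      have hPsucc : P (k+1) = P k * (1 + ((2:ℝ)^(k+1) * c₁)⁻¹) := by
        simp only [hP]
        exact Finset.prod_range_succ _ _
      have hSsucc : S (k+1) = S k + (Real.log 2 + ((k:ℝ)+1) * Real.log b) / (2:ℝ)^(k+1) := by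
        simp only [hS]
        exact Finset.sum_range_succ _ _
      have h6 : α * (2^k * P k * (T + S k)) = 2^(k+1) * P (k+1) * (T + S k) := by
        rw [hαeq, hPsucc]; ring
      have h7 : 2^(k+1) * P (k+1) * (T + S (k+1))
          = 2^(k+1) * P (k+1) * (T + S k) + P (k+1) * (Real.log 2 + ((k:ℝ)+1) * Real.log b) := by
        rw [hSsucc]
        have h1 : (2:ℝ)^(k+1) ≠ 0 := by positivity
        field_simp
        ring
      have h8 : Real.log 2 + ((k:ℝ)+1) * Real.log b
          ≤ P (k+1) * (Real.log 2 + ((k:ℝ)+1) * Real.log b) := by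
        apply le_mul_of_one_le_left _ (hP1 (k+1))
        positivity
      calc Real.log (N (k+1)) ≤ Real.log 2 + ((k:ℝ)+1) * Real.log b + α * Real.log (N k) := hlogstep
        _ ≤ Real.log 2 + ((k:ℝ)+1) * Real.log b + 2^(k+1) * P (k+1) * (T + S k) := by
            rw [← h6]; linarith
        _ ≤ 2^(k+1) * P (k+1) * (T + S (k+1)) := by rw [h7]; linarith
  have hCpos : 0 < C := by rw [hC]; positivity
  have hub : ∀ k : ℕ, M k ^ ((2:ℝ) ^ (-(k:ℝ))) ≤ C ^ E := by
    intro k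
    have hPk : P k ≤ E := by
      have h1 : P k ≤ ∏ j ∈ Finset.range k, Real.exp (((2:ℝ)^(j+1) * c₁)⁻¹) := by
        simp only [hP]
        apply Finset.prod_le_prod
        · intro j _; positivity
        · intro j _
          have := Real.add_one_le_exp (((2:ℝ)^(j+1) * c₁)⁻¹)
          linarith
      rw [← Real.exp_sum] at h1
      have h2 : ∑ j ∈ Finset.range k, ((2:ℝ)^(j+1) * c₁)⁻¹ ≤ 1 / c₁ := by
        have h3 : ∑ j ∈ Finset.range k, ((2:ℝ)^(j+1) * c₁)⁻¹
            = c₁⁻¹ * ∑ j ∈ Finset.range k, ((2:ℝ)^(j+1))⁻¹ := by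
          rw [Finset.mul_sum]
          apply Finset.sum_congr rfl
          intro j _
          rw [mul_inv]; ring
        rw [h3, aux_sum_geo, one_div]
        have h5 : (0:ℝ) ≤ ((2:ℝ)^k)⁻¹ := by positivity
        have h6 : (0:ℝ) ≤ c₁⁻¹ := le_of_lt (inv_pos.mpr hc1)
        nlinarith
      refine le_trans h1 ?_
      rw [hE]
      exact Real.exp_le_exp.mpr h2
    have hSk : S k ≤ Real.log 2 + 2 * Real.log b := by
      have h1 : S k = Real.log 2 * ∑ j ∈ Finset.range k, ((2:ℝ)^(j+1))⁻¹
          + Real.log b * ∑ j ∈ Finset.range k, ((j:ℝ)+1)/(2:ℝ)^(j+1) := by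
        simp only [hS]
        rw [Finset.mul_sum, Finset.mul_sum, ← Finset.sum_add_distrib]
        apply Finset.sum_congr rfl
        intro j _
        have hj : (2:ℝ)^(j+1) ≠ 0 := by positivity
        field_simp
      rw [h1, aux_sum_geo, aux_sum_jgeo]
      have h2 : (0:ℝ) ≤ ((2:ℝ)^k)⁻¹ := by positivity
      have h3 : (0:ℝ) ≤ ((k:ℝ)+2)/(2:ℝ)^k := by positivity
      nlinarith
    have hlogC : T + Real.log 2 + 2 * Real.log b ≤ Real.log C := by
      have hsq : (1:ℝ) ≤ Real.sqrt 2 := by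
        rw [show (1:ℝ) = Real.sqrt 1 from (Real.sqrt_one).symm]
        exact Real.sqrt_le_sqrt one_le_two
      have hC2 : Real.log C = Real.log 2 + Real.log (Real.sqrt 2) + 3 * Real.log b
          + (1 + 1/c₁) * Real.log a + Real.log c₃ := by
        rw [hC, Real.log_mul (by positivity) (by positivity),
          Real.log_mul (by positivity) (by positivity),
          Real.log_mul (by positivity) (by positivity),
          Real.log_mul (by norm_num) (by positivity),
          Real.log_pow, Real.log_rpow ha0]
        push_cast; ring
      have hTeq : T = Real.log c₃ + Real.log a := by
        rw [hT, Real.log_mul (by positivity) (by positivity)]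
      have hlogsq : 0 ≤ Real.log (Real.sqrt 2) := Real.log_nonneg hsq
      have hc1a : 0 ≤ (1/c₁) * Real.log a := by positivity
      rw [hC2, hTeq]
      nlinarith
    have hr : (2:ℝ) ^ (-(k:ℝ)) = ((2:ℝ)^k)⁻¹ := by
      rw [← Real.rpow_natCast 2 k, ← Real.rpow_neg (by norm_num : (0:ℝ) ≤ 2)]
    have hMk0 : 0 < M k := lt_of_lt_of_le one_pos (hM1 k)
    have step1 : M k ^ ((2:ℝ) ^ (-(k:ℝ))) ≤ N k ^ ((2:ℝ) ^ (-(k:ℝ))) :=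
      Real.rpow_le_rpow (le_of_lt hMk0) (le_max_left _ _) (by positivity)
    have step2 : N k ^ ((2:ℝ) ^ (-(k:ℝ))) = Real.exp (((2:ℝ)^k)⁻¹ * Real.log (N k)) := by
      rw [Real.rpow_def_of_pos (hN0 k), hr]
      ring_nf
    have hEpos : 0 < E := Real.exp_pos _
    have step3 : ((2:ℝ)^k)⁻¹ * Real.log (N k) ≤ E * Real.log C := by
      have h2k : (0:ℝ) < (2:ℝ)^k := by positivity
      have h1 : ((2:ℝ)^k)⁻¹ * Real.log (N k) ≤ ((2:ℝ)^k)⁻¹ * (2^k * P k * (T + S k)) :=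
        mul_le_mul_of_nonneg_left (key k) (by positivity)
      have h2 : ((2:ℝ)^k)⁻¹ * (2^k * P k * (T + S k)) = P k * (T + S k) := by
        field_simp
      have h3 : P k * (T + S k) ≤ E * (T + S k) := by
        apply mul_le_mul_of_nonneg_right hPk
        have := hS0 k
        linarith
      have h4 : E * (T + S k) ≤ E * (T + (Real.log 2 + 2 * Real.log b)) := by
        apply mul_le_mul_of_nonneg_left _ (le_of_lt hEpos)
        linarith [hSk]
      have h5 : E * (T + (Real.log 2 + 2 * Real.log b)) ≤ E * Real.log C := by
        apply mul_le_mul_of_nonneg_left _ (le_of_lt hEpos)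
        linarith [hlogC]
      linarith
    have step4 : C ^ E = Real.exp (E * Real.log C) := by
      rw [Real.rpow_def_of_pos hCpos]
      ring_nf
    calc M k ^ ((2:ℝ) ^ (-(k:ℝ))) ≤ N k ^ ((2:ℝ) ^ (-(k:ℝ))) := step1
      _ = Real.exp (((2:ℝ)^k)⁻¹ * Real.log (N k)) := step2
      _ ≤ Real.exp (E * Real.log C) := Real.exp_le_exp.mpr step3
      _ = C ^ E := step4.symm
  refine Filter.liminf_le_of_frequently_le (Frequently.of_forall hub) ?_
  exact Filter.isBoundedUnder_of ⟨1, fun k => Real.one_le_rpow (hM1 k) (by positivity)⟩
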